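/- arXiv:1806.05956 — 2 statements merged into one kernel-verified Lean document; each statement's English description precedes it below -/
import Mathlib

section
/- Let N be the flow network for a CNF formula θ = C_1 ∧ … ∧ C_m over variables x_1, …, x_n, in which every literal occurs in exactly k clauses, constructed as follows: the source s has an edge of capacity k to each of n 'pair' vertices p_1, …, p_n; each p_i has edges of capacity k to literal vertices x_i and x̄_i; each literal vertex z has a unit-capacity edge to each clause vertex C_j such that z appears in C_j; and each clause vertex is a target. Then θ is satisfiable if and only if there exists an integral flow f in N such that f(s) = kn, every literal vertex z has f(z) ∈ {0, k}, and every clause vertex C_j has f(C_j) ≥ 1. -/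
open Finset

namespace Stmt5

/-- Vertices of the reduction network: the source, a 'pair' vertex for each
variable, a vertex for each literal, and a vertex for each clause. -/
abbrev V (n m : ℕ) := Unit ⊕ Fin n ⊕ (Fin n × Bool) ⊕ Fin m

variable {n m : ℕ}

set_option synthInstance.maxSize 1024

instance : DecidableEq (V n m × V n m) := inferInstance

def src : V n m := Sum.inl ()
def pr (i : Fin n) : V n m := Sum.inr (Sum.inl i)
def lit (l : Fin n × Bool) : V n m := Sum.inr (Sum.inr (Sum.inl l))
def cl (j : Fin m) : V n m := Sum.inr (Sum.inr (Sum.inr j))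

/-- The edges of the reduction network for a CNF formula `θ` (clause `j` is the
set of literals `θ j`): source to pairs, pairs to their two literals, and each
literal to the clauses containing it. -/
def edges (θ : Fin m → Finset (Fin n × Bool)) : Finset (V n m × V n m) :=
  (Finset.univ.image fun i : Fin n => ((src : V n m), pr i)) ∪
  (Finset.univ.image fun l : Fin n × Bool => (pr l.1, lit l)) ∪
  ((Finset.univ : Finset (Fin n × Bool)).biUnion fun l =>
    (Finset.univ.filter fun j : Fin m => l ∈ θ j).image fun j => (lit l, cl j))

/-- Capacities: `k` on edges from the source and on pair-to-literal edges,
`1` on literal-to-clause edges. -/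
def cap (k : ℕ) : V n m × V n m → ℕ
  | (Sum.inl _, _) => k
  | (Sum.inr (Sum.inl _), _) => k
  | _ => 1

/-- `f` is a flow on the reduction network. -/
def IsFlow (θ : Fin m → Finset (Fin n × Bool)) (k : ℕ) (f : V n m × V n m → ℕ) : Prop :=
  (∀ e, e ∉ edges θ → f e = 0) ∧ (∀ e ∈ edges θ, f e ≤ cap k e) ∧
  (∀ v : V n m, v ≠ src → (∀ j : Fin m, v ≠ cl j) →
    ∑ e ∈ (edges θ).filter (fun e => e.2 = v), f e
      = ∑ e ∈ (edges θ).filter (fun e => e.1 = v), f e)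

/-- The flow through a vertex `v ≠ src`: the sum of the incoming flow. -/
def flowIn (θ : Fin m → Finset (Fin n × Bool)) (f : V n m × V n m → ℕ) (v : V n m) : ℕ :=
  ∑ e ∈ (edges θ).filter (fun e => e.2 = v), f e

-- key sum lemma
lemma sum_edges (θ : Fin m → Finset (Fin n × Bool)) (g : V n m × V n m → ℕ) :
    ∑ e ∈ edges θ, g e =
      ((∑ i : Fin n, g (src, pr i)) + ∑ l : Fin n × Bool, g (pr l.1, lit l)) +
      ∑ l : Fin n × Bool, ∑ j ∈ Finset.univ.filter (fun j : Fin m => l ∈ θ j),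
        g (lit l, cl j) := by
  classical
  set A := (Finset.univ.image fun i : Fin n => (((src, pr i)) : V n m × V n m)) with hA
  set B := (Finset.univ.image fun l : Fin n × Bool => (((pr l.1, lit l)) : V n m × V n m)) with hB
  set C := ((Finset.univ : Finset (Fin n × Bool)).biUnion fun l =>
    (Finset.univ.filter fun j : Fin m => l ∈ θ j).image fun j =>
      (((lit l, cl j)) : V n m × V n m)) with hC
  have hdAB : Disjoint A B := by
    refine Finset.disjoint_left.2 fun e he1 he2 => ?_
    simp only [hA, hB, Finset.mem_image, Finset.mem_univ, true_and] at he1 he2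
    obtain ⟨i, rfl⟩ := he1
    obtain ⟨l, h⟩ := he2
    rw [Prod.ext_iff] at h
    simp [src, pr] at h
  have hdABC : Disjoint (A ∪ B) C := by
    refine Finset.disjoint_left.2 fun e he1 he2 => ?_
    simp only [hC, Finset.mem_biUnion, Finset.mem_image, Finset.mem_filter,
      Finset.mem_univ, true_and] at he2
    obtain ⟨l, j, _, rfl⟩ := he2
    simp only [hA, hB, Finset.mem_union, Finset.mem_image, Finset.mem_univ,
      true_and] at he1
    rcases he1 with ⟨i, h⟩ | ⟨l', h⟩ <;> (rw [Prod.ext_iff] at h; simp [src, pr, lit] at h)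
  have hinj1 : ∀ a ∈ (Finset.univ : Finset (Fin n)), ∀ b ∈ Finset.univ,
      (((src, pr a)) : V n m × V n m) = ((src, pr b)) → a = b := by
    intro a _ b _ h
    rw [Prod.ext_iff] at h
    simpa [pr] using h.2
  have hinj2 : ∀ a ∈ (Finset.univ : Finset (Fin n × Bool)), ∀ b ∈ Finset.univ,
      (((pr a.1, lit a)) : V n m × V n m) = ((pr b.1, lit b)) → a = b := by
    intro a _ b _ h
    rw [Prod.ext_iff] at h
    simpa [lit] using h.2
  have hdC : ∀ a ∈ (Finset.univ : Finset (Fin n × Bool)), ∀ b ∈ Finset.univ, a ≠ b →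
      Disjoint ((Finset.univ.filter fun j : Fin m => a ∈ θ j).image fun j =>
        (((lit a, cl j)) : V n m × V n m))
        ((Finset.univ.filter fun j : Fin m => b ∈ θ j).image fun j =>
        (((lit b, cl j)) : V n m × V n m)) := by
    intro a _ b _ hab
    refine Finset.disjoint_left.2 fun e he1 he2 => hab ?_
    simp only [Finset.mem_image, Finset.mem_filter, Finset.mem_univ, true_and] at he1 he2
    obtain ⟨j1, _, rfl⟩ := he1
    obtain ⟨j2, _, h⟩ := he2
    rw [Prod.ext_iff] at h
    simpa [lit] using h.1.symm
  have : edges θ = (A ∪ B) ∪ C := rfl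
  rw [this, Finset.sum_union hdABC, Finset.sum_union hdAB, Finset.sum_image hinj1,
    Finset.sum_image hinj2, Finset.sum_biUnion hdC]
  congr 1
  refine Finset.sum_congr rfl fun l _ => ?_
  rw [Finset.sum_image]
  intro a _ b _ h
  rw [Prod.ext_iff] at h
  simpa [cl] using h.2

variable {θ : Fin m → Finset (Fin n × Bool)} {f : V n m × V n m → ℕ}

lemma mem_src_pr (i : Fin n) : ((src, pr i) : V n m × V n m) ∈ edges θ := by
  simp only [edges, Finset.mem_union, Finset.mem_image, Finset.mem_univ, true_and]
  exact Or.inl (Or.inl ⟨i, rfl⟩)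

lemma mem_pr_lit (l : Fin n × Bool) : ((pr l.1, lit l) : V n m × V n m) ∈ edges θ := by
  simp only [edges, Finset.mem_union, Finset.mem_image, Finset.mem_univ, true_and]
  exact Or.inl (Or.inr ⟨l, rfl⟩)

lemma mem_lit_cl {l : Fin n × Bool} {j : Fin m} (h : l ∈ θ j) :
    ((lit l, cl j) : V n m × V n m) ∈ edges θ := by
  simp only [edges, Finset.mem_union, Finset.mem_biUnion, Finset.mem_image,
    Finset.mem_filter, Finset.mem_univ, true_and]
  exact Or.inr ⟨l, j, h, rfl⟩

lemma out_src_eq : ∑ e ∈ (edges θ).filter (fun e => e.1 = src), f e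
    = ∑ i : Fin n, f (src, pr i) := by
  rw [Finset.sum_filter, sum_edges]
  simp [src, pr, lit, cl]

lemma in_pr_eq (i : Fin n) : ∑ e ∈ (edges θ).filter (fun e => e.2 = pr i), f e
    = f (src, pr i) := by
  rw [Finset.sum_filter, sum_edges]
  simp [src, pr, lit, cl]

lemma out_pr_eq (i : Fin n) : ∑ e ∈ (edges θ).filter (fun e => e.1 = pr i), f e
    = f (pr i, lit (i, true)) + f (pr i, lit (i, false)) := by
  rw [Finset.sum_filter, sum_edges]
  simp only [src, pr, lit, cl]
  rw [Fintype.sum_prod_type_right]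
  simp [Finset.sum_ite_eq']

lemma in_lit_eq (l : Fin n × Bool) : ∑ e ∈ (edges θ).filter (fun e => e.2 = lit l), f e
    = f (pr l.1, lit l) := by
  rw [Finset.sum_filter, sum_edges]
  simp [src, pr, lit, cl, Finset.sum_ite_eq']

lemma out_lit_eq (l : Fin n × Bool) : ∑ e ∈ (edges θ).filter (fun e => e.1 = lit l), f e
    = ∑ j ∈ Finset.univ.filter (fun j : Fin m => l ∈ θ j), f (lit l, cl j) := by
  rw [Finset.sum_filter, sum_edges]
  simp only [src, pr, lit, cl, Sum.inl.injEq, Sum.inr.injEq, reduceCtorEq,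
    if_false, Finset.sum_const_zero, zero_add]
  rw [Finset.sum_eq_single l]
  · simp
  · intro b _ hb
    simp [hb]
  · simp

lemma in_cl_eq (j : Fin m) : ∑ e ∈ (edges θ).filter (fun e => e.2 = cl j), f e
    = ∑ l ∈ Finset.univ.filter (fun l : Fin n × Bool => l ∈ θ j), f (lit l, cl j) := by
  rw [Finset.sum_filter, sum_edges]
  simp [src, pr, lit, cl, Finset.sum_ite_eq', Finset.sum_filter]

/-- The flow induced by a satisfying assignment. -/
def F (θ : Fin m → Finset (Fin n × Bool)) (k : ℕ) (τ : Fin n → Bool) :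
    V n m × V n m → ℕ
  | (Sum.inl _, Sum.inr (Sum.inl _)) => k
  | (Sum.inr (Sum.inl i), Sum.inr (Sum.inr (Sum.inl l))) =>
      if i = l.1 ∧ τ l.1 = l.2 then k else 0
  | (Sum.inr (Sum.inr (Sum.inl l)), Sum.inr (Sum.inr (Sum.inr j))) =>
      if τ l.1 = l.2 ∧ l ∈ θ j then 1 else 0
  | _ => 0

variable {k : ℕ} {τ : Fin n → Bool}

lemma F_src_pr (i : Fin n) : F θ k τ (src, pr i) = k := rfl

lemma F_pr_lit (i : Fin n) (l : Fin n × Bool) :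
    F θ k τ (pr i, lit l) = if i = l.1 ∧ τ l.1 = l.2 then k else 0 := rfl

lemma F_lit_cl (l : Fin n × Bool) (j : Fin m) :
    F θ k τ (lit l, cl j) = if τ l.1 = l.2 ∧ l ∈ θ j then 1 else 0 := rfl

lemma F_zero_off {e : V n m × V n m} (he : e ∉ edges θ) : F θ k τ e = 0 := by
  by_contra hne
  apply he
  obtain ⟨a, b⟩ := e
  rcases a with _ | i | l | j <;> rcases b with _ | i' | l' | j' <;>
    simp only [F] at hne
  · exact absurd trivial hne
  · exact mem_src_pr i'
  · exact absurd trivial hne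
  · exact absurd trivial hne
  · exact absurd trivial hne
  · exact absurd trivial hne
  · split at hne
    · next h =>
        obtain ⟨rfl, _⟩ := h
        exact mem_pr_lit l'
    · exact absurd rfl hne
  · exact absurd trivial hne
  · exact absurd trivial hne
  · exact absurd trivial hne
  · exact absurd trivial hne
  · split at hne
    · next h => exact mem_lit_cl h.2
    · exact absurd rfl hne
  · exact absurd trivial hne
  · exact absurd trivial hne
  · exact absurd trivial hne
  · exact absurd trivial hne

/-- Let `θ` be a CNF formula with `m` clauses over `n` variables in
which every literal occurs in exactly `k` clauses.  Then `θ` is satisfiable iff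
the reduction network has an integral flow of value `k * n` in which every
literal vertex carries flow `0` or `k` and every clause vertex carries positive
flow. -/
theorem cnf_sat_iff_flow (θ : Fin m → Finset (Fin n × Bool)) (k : ℕ) (hk : 0 < k)
    (hocc : ∀ l : Fin n × Bool, (Finset.univ.filter fun j : Fin m => l ∈ θ j).card = k) :
    (∃ τ : Fin n → Bool, ∀ j : Fin m, ∃ l ∈ θ j, τ l.1 = l.2) ↔
    (∃ f : V n m × V n m → ℕ, IsFlow θ k f ∧
      (∑ e ∈ (edges θ).filter (fun e => e.1 = src), f e) = k * n ∧
      (∀ l : Fin n × Bool, flowIn θ f (lit l) = 0 ∨ flowIn θ f (lit l) = k) ∧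
      (∀ j : Fin m, 1 ≤ flowIn θ f (cl j))) := by
  constructor
  · rintro ⟨τ, hτ⟩
    refine ⟨F θ k τ, ⟨fun e he => F_zero_off he, ?_, ?_⟩, ?_, ?_, ?_⟩
    · -- capacity
      rintro ⟨a, b⟩ _
      rcases a with _ | i | l | j <;> rcases b with _ | i' | l' | j' <;>
        simp only [F, cap] <;> (try split) <;> omega
    · -- conservation
      rintro (_ | i | l | j) hv hcl
      · exact absurd rfl hv
      · show ∑ e ∈ (edges θ).filter (fun e => e.2 = pr i), F θ k τ e
          = ∑ e ∈ (edges θ).filter (fun e => e.1 = pr i), F θ k τ e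
        rw [in_pr_eq, out_pr_eq]
        show F θ k τ (src, pr i) = F θ k τ (pr i, lit (i, true)) + F θ k τ (pr i, lit (i, false))
        rw [F_src_pr, F_pr_lit, F_pr_lit]
        cases h : τ i <;> simp [h]
      · show ∑ e ∈ (edges θ).filter (fun e => e.2 = lit l), F θ k τ e
          = ∑ e ∈ (edges θ).filter (fun e => e.1 = lit l), F θ k τ e
        rw [in_lit_eq, out_lit_eq, F_pr_lit]
        by_cases h : τ l.1 = l.2
        · rw [if_pos ⟨rfl, h⟩]
          rw [Finset.sum_congr rfl (fun j hj => ?_), Finset.sum_const, smul_eq_mul,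
            hocc l, mul_one]
          rw [F_lit_cl, if_pos ⟨h, (Finset.mem_filter.1 hj).2⟩]
        · rw [if_neg (fun hc => h hc.2)]
          symm
          refine Finset.sum_eq_zero fun j _ => ?_
          rw [F_lit_cl, if_neg (fun hc => h hc.1)]
      · exact absurd rfl (hcl j)
    · rw [out_src_eq]
      simp [F_src_pr, mul_comm]
    · intro l
      show _ = 0 ∨ _ = k
      unfold flowIn
      rw [in_lit_eq, F_pr_lit]
      split
      · exact Or.inr rfl
      · exact Or.inl rfl
    · intro j
      obtain ⟨l0, hl0, hsat⟩ := hτ j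
      show 1 ≤ _
      unfold flowIn
      rw [in_cl_eq]
      calc 1 = F θ k τ (lit l0, cl j) := by rw [F_lit_cl, if_pos ⟨hsat, hl0⟩]
        _ ≤ _ := Finset.single_le_sum
            (f := fun l : Fin n × Bool => F θ k τ (lit l, cl j))
            (fun _ _ => Nat.zero_le _)
            (Finset.mem_filter.2 ⟨Finset.mem_univ _, hl0⟩)
  · rintro ⟨f, ⟨hzero, hcap, hcons⟩, hval, hlit, hcl⟩
    -- each source edge is saturated
    have hle : ∀ i : Fin n, f (src, pr i) ≤ k := fun i => hcap _ (mem_src_pr i)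
    have hsum : ∑ i : Fin n, f (src, pr i) = k * n := by rw [← out_src_eq]; exact hval
    have hsrc : ∀ i : Fin n, f (src, pr i) = k := by
      by_contra hne
      push_neg at hne
      obtain ⟨i0, hi0⟩ := hne
      have hlt : ∑ i : Fin n, f (src, pr i) < ∑ _i : Fin n, k :=
        Finset.sum_lt_sum (fun i _ => hle i)
          ⟨i0, Finset.mem_univ _, lt_of_le_of_ne (hle i0) hi0⟩
      rw [hsum, Finset.sum_const, smul_eq_mul, Finset.card_univ, Fintype.card_fin,
        mul_comm] at hlt
      exact lt_irrefl _ hlt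
    have hpair : ∀ i : Fin n, f (pr i, lit (i, true)) + f (pr i, lit (i, false)) = k := by
      intro i
      have h := hcons (pr i) (by simp [pr, src]) (fun j => by simp [pr, cl])
      rw [in_pr_eq, out_pr_eq] at h
      rw [← h, hsrc i]
    have hlitval : ∀ l : Fin n × Bool, f (pr l.1, lit l) = 0 ∨ f (pr l.1, lit l) = k := by
      intro l
      have := hlit l
      unfold flowIn at this
      rwa [in_lit_eq] at this
    refine ⟨fun i => decide (f (pr i, lit (i, true)) = k), fun j => ?_⟩
    have h1 := hcl j
    unfold flowIn at h1
    rw [in_cl_eq] at h1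
    have hne : ∑ l ∈ Finset.univ.filter (fun l : Fin n × Bool => l ∈ θ j),
        f (lit l, cl j) ≠ 0 := by omega
    obtain ⟨l, hlmem, hpos⟩ := Finset.exists_ne_zero_of_sum_ne_zero hne
    have hlθ : l ∈ θ j := (Finset.mem_filter.1 hlmem).2
    refine ⟨l, hlθ, ?_⟩
    -- flow into lit l is positive, hence equals k
    have hout : f (lit l, cl j) ≤
        ∑ j' ∈ Finset.univ.filter (fun j' : Fin m => l ∈ θ j'), f (lit l, cl j') :=
      Finset.single_le_sum (f := fun j' : Fin m => f (lit l, cl j'))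
        (fun _ _ => Nat.zero_le _)
        (Finset.mem_filter.2 ⟨Finset.mem_univ _, hlθ⟩)
    have hc := hcons (lit l) (by simp [lit, src]) (fun j' => by simp [lit, cl])
    rw [in_lit_eq, out_lit_eq] at hc
    have hk' : f (pr l.1, lit l) = k := by
      rcases hlitval l with h | h
      · omega
      · exact h
    obtain ⟨i, b⟩ := l
    cases b
    · -- l.2 = false : flow on the `true` edge must be 0
      have := hpair i
      simp only at hk'
      have htrue : f (pr i, lit (i, true)) ≠ k := by omega
      simp [htrue]
    · simp only at hk'
      simp [hk']


end Stmt5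
end

section
/- Let N be a finite flow network and let φ be a set of constraints assigning to each vertex v a required interval [l(v), u(v)] ⊆ ℕ. Suppose there exists a real-valued flow f : E → ℝ≥0 (with f(e) ≤ c(e) and conservation) such that l(v) ≤ f(v) ≤ u(v) for all v, where all l(v), u(v), and capacities are integers. Then there also exists an integer-valued flow g : E → ℕ satisfying l(v) ≤ g(v) ≤ u(v) for all v. -/
open Finset

namespace Stmt14

variable {V : Type*} [Fintype V] [DecidableEq V]

/-- `f` is a real-valued flow on the network `(E, c, s, T)`. -/
def IsRealFlow (E : Finset (V × V)) (c : V × V → ℕ) (s : V) (T : Finset V)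
    (f : V × V → ℝ) : Prop :=
  (∀ e, e ∉ E → f e = 0) ∧ (∀ e ∈ E, 0 ≤ f e ∧ f e ≤ (c e : ℝ)) ∧
  (∀ v : V, v ≠ s → v ∉ T →
    ∑ e ∈ E.filter (fun e => e.2 = v), f e = ∑ e ∈ E.filter (fun e => e.1 = v), f e)

/-- `f` is an integer-valued flow on the network `(E, c, s, T)`. -/
def IsNatFlow (E : Finset (V × V)) (c : V × V → ℕ) (s : V) (T : Finset V)
    (f : V × V → ℕ) : Prop :=
  (∀ e, e ∉ E → f e = 0) ∧ (∀ e ∈ E, f e ≤ c e) ∧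
  (∀ v : V, v ≠ s → v ∉ T →
    ∑ e ∈ E.filter (fun e => e.2 = v), f e = ∑ e ∈ E.filter (fun e => e.1 = v), f e)

/-- The flow through a vertex (real-valued flows). -/
def flowThroughR (E : Finset (V × V)) (s : V) (f : V × V → ℝ) (v : V) : ℝ :=
  if v = s then ∑ e ∈ E.filter (fun e => e.1 = s), f e
  else ∑ e ∈ E.filter (fun e => e.2 = v), f e

/-- The flow through a vertex (integer-valued flows). -/
def flowThroughN (E : Finset (V × V)) (s : V) (f : V × V → ℕ) (v : V) : ℕ :=
  if v = s then ∑ e ∈ E.filter (fun e => e.1 = s), f e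
  else ∑ e ∈ E.filter (fun e => e.2 = v), f e

def IsInt (x : ℝ) : Prop := ∃ m : ℤ, x = m

lemma IsInt.sum {α : Type*} {s : Finset α} {x : α → ℝ} (h : ∀ a ∈ s, IsInt (x a)) :
    IsInt (∑ a ∈ s, x a) := by
  refine ⟨∑ a ∈ s, ⌊x a⌋, ?_⟩
  rw [Int.cast_sum]
  refine Finset.sum_congr rfl fun a ha => ?_
  obtain ⟨m, hm⟩ := h a ha
  rw [hm, Int.floor_intCast]

section Kernel

variable {A N : Type*} [Fintype A] [DecidableEq A] [Fintype N] [DecidableEq N]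

lemma exists_circulation (tl hd : A → N) (Cons : Finset N) (F : Finset A)
    (hFne : F.Nonempty)
    (hdeg : ∀ w ∈ Cons, (F.filter (fun a => tl a = w)).card
      + (F.filter (fun a => hd a = w)).card ≠ 1) :
    ∃ d : A → ℝ, d ≠ 0 ∧ (∀ a ∉ F, d a = 0) ∧ ∀ w ∈ Cons,
      ∑ a ∈ univ.filter (fun a => hd a = w), d a
        = ∑ a ∈ univ.filter (fun a => tl a = w), d a := by
  classical
  set deg : N → ℕ := fun w => (F.filter (fun a => tl a = w)).card
      + (F.filter (fun a => hd a = w)).card with hdegdef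
  set W : Finset N := Cons.filter (fun w => 0 < deg w) with hWdef
  have hWsub : W ⊆ Cons := filter_subset _ _
  have hmemW : ∀ a ∈ F, ∀ w ∈ Cons, (tl a = w ∨ hd a = w) → w ∈ W := by
    intro a ha w hw h
    refine mem_filter.2 ⟨hw, ?_⟩
    rcases h with h | h
    · exact lt_of_lt_of_le (card_pos.2 ⟨a, mem_filter.2 ⟨ha, h⟩⟩) (Nat.le_add_right _ _)
    · exact lt_of_lt_of_le (card_pos.2 ⟨a, mem_filter.2 ⟨ha, h⟩⟩) (Nat.le_add_left _ _)
  have key : ∀ g : A → N, ∑ w ∈ W, (F.filter (fun a => g a = w)).card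
      = ∑ a ∈ F, (if g a ∈ W then 1 else 0) := by
    intro g
    simp_rw [Finset.card_filter]
    rw [Finset.sum_comm]
    refine sum_congr rfl fun a _ => ?_
    exact Finset.sum_ite_eq W (g a) (fun _ => 1)
  have hcount : 2 * W.card ≤ ∑ a ∈ F,
      ((if tl a ∈ W then 1 else 0) + (if hd a ∈ W then 1 else 0)) := by
    calc 2 * W.card = ∑ _w ∈ W, 2 := by rw [sum_const, smul_eq_mul, mul_comm]
    _ ≤ ∑ w ∈ W, deg w := by
        refine sum_le_sum fun w hw => ?_
        have h1 : 0 < deg w := (mem_filter.1 hw).2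
        have h2 : deg w ≠ 1 := hdeg w (mem_filter.1 hw).1
        omega
    _ = ∑ a ∈ F, ((if tl a ∈ W then 1 else 0) + (if hd a ∈ W then 1 else 0)) := by
        rw [hdegdef]
        rw [Finset.sum_add_distrib, key tl, key hd, ← Finset.sum_add_distrib]
  -- the linear map
  set coef : A → N → ℝ := fun a w =>
    (if hd a = w then 1 else 0) - (if tl a = w then 1 else 0) with hcoef
  set Φraw : (↥F → ℝ) → (↥W → ℝ) := fun z w => ∑ a : ↥F, coef ↑a ↑w * z a with hPhi
  have hlin : IsLinearMap ℝ Φraw := by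
    constructor
    · intro z z'; funext w
      simp only [hPhi, Pi.add_apply, mul_add, Finset.sum_add_distrib]
    · intro r z; funext w
      simp only [hPhi, Pi.smul_apply, smul_eq_mul, Finset.mul_sum]
      refine sum_congr rfl fun a _ => by ring
  set Φ : (↥F → ℝ) →ₗ[ℝ] (↥W → ℝ) := IsLinearMap.mk' Φraw hlin with hPhiL
  have hdimF : Module.finrank ℝ (↥F → ℝ) = F.card := by
    rw [Module.finrank_fintype_fun_eq_card, Fintype.card_coe]
  have hdimW : Module.finrank ℝ (↥W → ℝ) = W.card := by
    rw [Module.finrank_fintype_fun_eq_card, Fintype.card_coe]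
  have hrange : Module.finrank ℝ (LinearMap.range Φ) < F.card := by
    by_cases hfree : ∀ a ∈ F, tl a ∈ Cons ∧ hd a ∈ Cons
    · -- all endpoints are conservation nodes
      have hWF : W.card ≤ F.card := by
        have h2 : ∑ a ∈ F, ((if tl a ∈ W then 1 else 0) + (if hd a ∈ W then 1 else 0))
            ≤ ∑ _a ∈ F, 2 := by
          refine sum_le_sum fun a _ => ?_
          split_ifs <;> omega
        rw [sum_const, smul_eq_mul] at h2
        omega
      have hWne : W.Nonempty := by
        obtain ⟨a, ha⟩ := hFne
        exact ⟨tl a, hmemW a ha (tl a) (hfree a ha).1 (Or.inl rfl)⟩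
      set σraw : (↥W → ℝ) → ℝ := fun y => ∑ w : ↥W, y w with hsig
      have hσlin : IsLinearMap ℝ σraw := by
        constructor
        · intro y y'; simp [hsig, Finset.sum_add_distrib]
        · intro r y; simp [hsig, Finset.mul_sum]
      set σ : (↥W → ℝ) →ₗ[ℝ] ℝ := IsLinearMap.mk' σraw hσlin with hσL
      have hsub : LinearMap.range Φ ≤ LinearMap.ker σ := by
        rintro _ ⟨z, rfl⟩
        rw [LinearMap.mem_ker]
        show ∑ w : ↥W, Φraw z w = 0
        rw [hPhi]
        rw [Finset.sum_comm]
        refine Finset.sum_eq_zero fun a _ => ?_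
        rw [← Finset.sum_mul]
        have : ∑ w : ↥W, coef ↑a ↑w = 0 := by
          rw [hcoef]
          have e1 : ∀ g : A → N, ∑ w : ↥W, (if g ↑a = ↑w then (1:ℝ) else 0)
              = if g ↑a ∈ W then 1 else 0 := by
            intro g
            rw [Finset.sum_coe_sort W (fun w => if g ↑a = w then (1:ℝ) else 0)]
            exact Finset.sum_ite_eq W (g ↑a) (fun _ => 1)
          simp only [Finset.sum_sub_distrib, e1]
          have h1 := hfree ↑a a.2
          rw [if_pos (hmemW ↑a a.2 (hd ↑a) h1.2 (Or.inr rfl)),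
            if_pos (hmemW ↑a a.2 (tl ↑a) h1.1 (Or.inl rfl)), sub_self]
        rw [this, zero_mul]
      have hker_ne_top : LinearMap.ker σ ≠ ⊤ := by
        intro h
        have h1 : σ (fun _ => 1) = 0 := by
          have : (fun _ => (1:ℝ)) ∈ LinearMap.ker σ := h ▸ Submodule.mem_top
          exact LinearMap.mem_ker.1 this
        have h2 : σ (fun _ => 1) = (W.card : ℝ) := by
          show ∑ _w : ↥W, (1:ℝ) = W.card
          simp [Fintype.card_coe]
        rw [h2] at h1
        exact (Nat.cast_ne_zero.2 hWne.card_pos.ne' : (W.card : ℝ) ≠ 0) h1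
      calc Module.finrank ℝ (LinearMap.range Φ)
          ≤ Module.finrank ℝ (LinearMap.ker σ) := Submodule.finrank_mono hsub
        _ < Module.finrank ℝ (↥W → ℝ) := Submodule.finrank_lt hker_ne_top
        _ = W.card := hdimW
        _ ≤ F.card := hWF
    · -- some arc has a free endpoint
      push_neg at hfree
      obtain ⟨a0, ha0F, ha0⟩ := hfree
      have hlt : W.card < F.card := by
        have h2 : ∑ a ∈ F, ((if tl a ∈ W then 1 else 0) + (if hd a ∈ W then 1 else 0))
            < ∑ _a ∈ F, 2 := by
          refine Finset.sum_lt_sum (fun a _ => by split_ifs <;> omega) ⟨a0, ha0F, ?_⟩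
          have : tl a0 ∉ W ∨ hd a0 ∉ W := by
            by_cases h : tl a0 ∈ Cons
            · exact Or.inr fun hc => (ha0 h) (hWsub hc)
            · exact Or.inl fun hc => h (hWsub hc)
          rcases this with h | h <;> simp [h] <;> split_ifs <;> omega
        rw [sum_const, smul_eq_mul] at h2
        omega
      calc Module.finrank ℝ (LinearMap.range Φ)
          ≤ Module.finrank ℝ (↥W → ℝ) := (LinearMap.range Φ).finrank_le
        _ = W.card := hdimW
        _ < F.card := hlt
  have hkerpos : 0 < Module.finrank ℝ (LinearMap.ker Φ) := by
    have := LinearMap.finrank_range_add_finrank_ker Φ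
    rw [hdimF] at this
    omega
  have hker_ne_bot : LinearMap.ker Φ ≠ ⊥ := by
    intro h
    rw [h, finrank_bot] at hkerpos
    omega
  obtain ⟨z, hzker, hz0⟩ := Submodule.exists_mem_ne_zero_of_ne_bot hker_ne_bot
  refine ⟨fun a => if h : a ∈ F then z ⟨a, h⟩ else 0, ?_, ?_, ?_⟩
  · intro h
    apply hz0
    funext a
    have := congrFun h ↑a
    simpa [a.2] using this
  · intro a ha; exact dif_neg ha
  · intro w hw
    have hsum : ∀ g : A → N, ∑ a ∈ univ.filter (fun a => g a = w),
        (if h : a ∈ F then z ⟨a, h⟩ else 0)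
        = ∑ a : ↥F, (if g ↑a = w then z a else 0) := by
      intro g
      rw [Finset.sum_filter]
      rw [← Finset.sum_subset (Finset.subset_univ F)
        (fun a _ ha => by rw [dif_neg ha, ite_self])]
      rw [← Finset.sum_coe_sort F]
      refine Finset.sum_congr rfl fun a _ => ?_
      rw [dif_pos a.2]
    rw [hsum tl, hsum hd]
    by_cases hwW : w ∈ W
    · have hz := LinearMap.mem_ker.1 hzker
      have := congrFun hz ⟨w, hwW⟩
      have hthis : ∑ a : ↥F, coef ↑a w * z a = 0 := this
      rw [hcoef] at hthis
      simp only [sub_mul, ite_mul, one_mul, zero_mul, Finset.sum_sub_distrib] at hthis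
      linarith [hthis]
    · have hdeg0 : deg w = 0 := by
        by_contra h
        exact hwW (mem_filter.2 ⟨hw, Nat.pos_of_ne_zero h⟩)
      rw [hdegdef] at hdeg0
      simp only [Nat.add_eq_zero, Finset.card_eq_zero, Finset.filter_eq_empty_iff] at hdeg0
      rw [Finset.sum_eq_zero fun (a : ↥F) _ => if_neg (hdeg0.2 a.2)]
      rw [Finset.sum_eq_zero fun (a : ↥F) _ => if_neg (hdeg0.1 a.2)]
end Kernel

lemma IsInt.sub' {p q : ℝ} (hp : IsInt p) (hq : IsInt q) : IsInt (p - q) := by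
  obtain ⟨m, rfl⟩ := hp; obtain ⟨k, rfl⟩ := hq; exact ⟨m - k, by push_cast; ring⟩


section Main
variable {A N : Type*} [Fintype A] [DecidableEq A] [Fintype N] [DecidableEq N]

lemma base_case (tl hd : A → N) (Cons : Finset N) (L U : A → ℕ)
    (x : A → ℝ) (hint : ∀ a, IsInt (x a))
    (hbd : ∀ a, (L a : ℝ) ≤ x a ∧ x a ≤ (U a : ℝ))
    (hcons : ∀ w ∈ Cons, ∑ a ∈ univ.filter (fun a => hd a = w), x a
      = ∑ a ∈ univ.filter (fun a => tl a = w), x a) :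
    ∃ y : A → ℕ, (∀ a, L a ≤ y a ∧ y a ≤ U a) ∧
      ∀ w ∈ Cons, ∑ a ∈ univ.filter (fun a => hd a = w), y a
        = ∑ a ∈ univ.filter (fun a => tl a = w), y a := by
  have hxy : ∀ a, (((⌊x a⌋).toNat : ℕ) : ℝ) = x a := by
    intro a
    obtain ⟨m, hm⟩ := hint a
    have h0 : 0 ≤ m := by
      have h1 := (hbd a).1; rw [hm] at h1
      exact_mod_cast le_trans (Nat.cast_nonneg (L a)) h1
    rw [hm, Int.floor_intCast]
    exact_mod_cast congrArg (fun z : ℤ => (z : ℝ)) (Int.toNat_of_nonneg h0)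
  refine ⟨fun a => (⌊x a⌋).toNat, fun a => ?_, fun w hw => ?_⟩
  · constructor
    · have : (L a : ℝ) ≤ (((⌊x a⌋).toNat : ℕ) : ℝ) := by rw [hxy a]; exact (hbd a).1
      exact_mod_cast this
    · have : (((⌊x a⌋).toNat : ℕ) : ℝ) ≤ (U a : ℝ) := by rw [hxy a]; exact (hbd a).2
      exact_mod_cast this
  · have h := hcons w hw
    have hs : ∀ s : Finset A, ∑ a ∈ s, x a = ((∑ a ∈ s, (⌊x a⌋).toNat : ℕ) : ℝ) := by
      intro s; rw [Nat.cast_sum]; exact (Finset.sum_congr rfl fun a _ => (hxy a).symm)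
    rw [hs, hs] at h
    exact_mod_cast h

lemma aux_induction (tl hd : A → N) (Cons : Finset N) (L U : A → ℕ) :
    ∀ (n : ℕ) (x : A → ℝ) (Fn : Finset A),
      (∀ a, ¬ IsInt (x a) → a ∈ Fn) → Fn.card ≤ n →
      (∀ a, (L a : ℝ) ≤ x a ∧ x a ≤ (U a : ℝ)) →
      (∀ w ∈ Cons, ∑ a ∈ univ.filter (fun a => hd a = w), x a
        = ∑ a ∈ univ.filter (fun a => tl a = w), x a) →
      ∃ y : A → ℕ, (∀ a, L a ≤ y a ∧ y a ≤ U a) ∧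
        ∀ w ∈ Cons, ∑ a ∈ univ.filter (fun a => hd a = w), y a
          = ∑ a ∈ univ.filter (fun a => tl a = w), y a := by
  intro n
  induction n with
  | zero =>
    intro x Fn hFn hcard hbd hcons
    refine base_case tl hd Cons L U x (fun a => ?_) hbd hcons
    by_contra h
    have := hFn a h
    rw [Finset.card_eq_zero.1 (Nat.le_zero.1 hcard)] at this
    exact absurd this (Finset.notMem_empty a)
  | succ n IH =>
    intro x Fn hFn hcard hbd hcons
    classical
    by_cases hall : ∀ a, IsInt (x a)
    · exact base_case tl hd Cons L U x hall hbd hcons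
    set F : Finset A := Fn.filter (fun a => ¬ IsInt (x a)) with hF
    have hmemF : ∀ a, a ∈ F ↔ ¬ IsInt (x a) := by
      intro a
      simp only [hF, mem_filter]
      exact ⟨fun h => h.2, fun h => ⟨hFn a h, h⟩⟩
    have hFne : F.Nonempty := by
      push_neg at hall
      obtain ⟨a, ha⟩ := hall
      exact ⟨a, (hmemF a).2 ha⟩
    have hfl : ∀ a ∈ F, (⌊x a⌋ : ℝ) < x a := by
      intro a ha
      refine lt_of_le_of_ne (Int.floor_le _) fun h => ?_
      exact (hmemF a).1 ha ⟨⌊x a⌋, h.symm⟩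
    have hcl : ∀ a ∈ F, x a < (⌈x a⌉ : ℝ) := by
      intro a ha
      refine lt_of_le_of_ne (Int.le_ceil _) fun h => ?_
      exact (hmemF a).1 ha ⟨⌈x a⌉, h⟩
    have hLf : ∀ a ∈ F, (L a : ℝ) ≤ (⌊x a⌋ : ℝ) := by
      intro a _
      have : (L a : ℤ) ≤ ⌊x a⌋ := Int.le_floor.2 (by exact_mod_cast (hbd a).1)
      exact_mod_cast this
    have hUc : ∀ a ∈ F, (⌈x a⌉ : ℝ) ≤ (U a : ℝ) := by
      intro a _
      have : ⌈x a⌉ ≤ (U a : ℤ) := Int.ceil_le.2 (by exact_mod_cast (hbd a).2)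
      exact_mod_cast this
    have hdeg : ∀ w ∈ Cons, (F.filter (fun a => tl a = w)).card
        + (F.filter (fun a => hd a = w)).card ≠ 1 := by
      intro w hw h1
      have claim : ∀ g g' : A → N,
          (∑ a ∈ univ.filter (fun a => g a = w), x a
            = ∑ a ∈ univ.filter (fun a => g' a = w), x a) →
          (F.filter (fun a => g a = w)) = ∅ →
          ∀ a0, (F.filter (fun a => g' a = w)) = {a0} → False := by
        intro g g' heq hg a0 hg'
        have ha0mem' : a0 ∈ F.filter (fun a => g' a = w) := by
          rw [hg']; exact Finset.mem_singleton_self a0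
        have ha0F : a0 ∈ F := (Finset.mem_filter.1 ha0mem').1
        have ha0w : g' a0 = w := (Finset.mem_filter.1 ha0mem').2
        have ha0mem : a0 ∈ univ.filter (fun a => g' a = w) :=
          Finset.mem_filter.2 ⟨Finset.mem_univ _, ha0w⟩
        have hint1 : IsInt (∑ a ∈ univ.filter (fun a => g a = w), x a) := by
          refine IsInt.sum fun a ha => ?_
          by_contra h
          have : a ∈ F.filter (fun a => g a = w) :=
            Finset.mem_filter.2 ⟨(hmemF a).2 h, (Finset.mem_filter.1 ha).2⟩
          rw [hg] at this
          exact absurd this (Finset.notMem_empty a)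
        have hint2 : IsInt (∑ a ∈ (univ.filter (fun a => g' a = w)).erase a0, x a) := by
          refine IsInt.sum fun a ha => ?_
          by_contra h
          have h2 : a ∈ F.filter (fun a => g' a = w) :=
            Finset.mem_filter.2 ⟨(hmemF a).2 h,
              (Finset.mem_filter.1 (Finset.mem_of_mem_erase ha)).2⟩
          rw [hg'] at h2
          exact (Finset.ne_of_mem_erase ha) (Finset.mem_singleton.1 h2)
        have hsplit : x a0 = ∑ a ∈ univ.filter (fun a => g' a = w), x a
            - ∑ a ∈ (univ.filter (fun a => g' a = w)).erase a0, x a := by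
          rw [← Finset.sum_erase_add _ _ ha0mem]; ring
        have : IsInt (x a0) := by
          rw [hsplit, ← heq]
          exact IsInt.sub' hint1 hint2
        exact (hmemF a0).1 ha0F this
      rcases Nat.add_eq_one_iff.1 h1 with ⟨h2, h3⟩ | ⟨h2, h3⟩
      · obtain ⟨a0, ha0⟩ := Finset.card_eq_one.1 h3
        exact claim tl hd (hcons w hw).symm (Finset.card_eq_zero.1 h2) a0 ha0
      · obtain ⟨a0, ha0⟩ := Finset.card_eq_one.1 h2
        exact claim hd tl (hcons w hw) (Finset.card_eq_zero.1 h3) a0 ha0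
    obtain ⟨d, hd0, hdsupp, hdcons⟩ := exists_circulation tl hd Cons F hFne hdeg
    set S : Finset A := univ.filter (fun a => d a ≠ 0) with hS
    have hSne : S.Nonempty := by
      obtain ⟨a, ha⟩ := Function.ne_iff.1 hd0
      exact ⟨a, Finset.mem_filter.2 ⟨Finset.mem_univ _, ha⟩⟩
    have hSF : ∀ a ∈ S, a ∈ F := by
      intro a ha
      by_contra h
      exact (Finset.mem_filter.1 ha).2 (hdsupp a h)
    set ta : A → ℝ := fun a =>
      if 0 < d a then ((⌈x a⌉ : ℝ) - x a) / d a else (x a - (⌊x a⌋ : ℝ)) / (-(d a)) with hta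
    set t : ℝ := S.inf' hSne ta with htdef
    have hta_pos : ∀ a ∈ S, 0 < ta a := by
      intro a ha
      have hda : d a ≠ 0 := (Finset.mem_filter.1 ha).2
      have haF := hSF a ha
      simp only [hta]
      split_ifs with h
      · exact div_pos (sub_pos.2 (hcl a haF)) h
      · exact div_pos (sub_pos.2 (hfl a haF))
          (by simp only [neg_pos]; exact lt_of_le_of_ne (not_lt.1 h) hda)
    have ht0 : 0 ≤ t := Finset.le_inf' hSne ta fun a ha => (hta_pos a ha).le
    set x' : A → ℝ := fun a => x a + t * d a with hx'
    have hx'eq : ∀ a ∉ S, x' a = x a := by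
      intro a ha
      have : d a = 0 := by
        by_contra h
        exact ha (Finset.mem_filter.2 ⟨Finset.mem_univ _, h⟩)
      simp [hx', this]
    have hx'bd : ∀ a ∈ S, (⌊x a⌋ : ℝ) ≤ x' a ∧ x' a ≤ (⌈x a⌉ : ℝ) := by
      intro a ha
      have hda : d a ≠ 0 := (Finset.mem_filter.1 ha).2
      have hts : t ≤ ta a := Finset.inf'_le ta ha
      have haF := hSF a ha
      show (⌊x a⌋ : ℝ) ≤ x a + t * d a ∧ x a + t * d a ≤ (⌈x a⌉ : ℝ)
      by_cases h : 0 < d a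
      · constructor
        · nlinarith [hfl a haF]
        · have h2 : t * d a ≤ ta a * d a := mul_le_mul_of_nonneg_right hts h.le
          have h3 : ta a * d a = (⌈x a⌉ : ℝ) - x a := by
            rw [hta]; simp only [if_pos h]; field_simp
          linarith
      · have hneg : d a < 0 := lt_of_le_of_ne (not_lt.1 h) hda
        constructor
        · have h2 : ta a * d a ≤ t * d a := mul_le_mul_of_nonpos_right hts hneg.le
          have h3 : ta a * d a = (⌊x a⌋ : ℝ) - x a := by
            simp only [hta, if_neg h]
            rw [div_neg, neg_mul, div_mul_cancel₀ _ hda]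
            ring
          linarith
        · nlinarith [hcl a haF]
    have hbd' : ∀ a, (L a : ℝ) ≤ x' a ∧ x' a ≤ (U a : ℝ) := by
      intro a
      by_cases ha : a ∈ S
      · have haF := hSF a ha
        exact ⟨le_trans (hLf a haF) (hx'bd a ha).1, le_trans (hx'bd a ha).2 (hUc a haF)⟩
      · rw [hx'eq a ha]; exact hbd a
    have hcons' : ∀ w ∈ Cons, ∑ a ∈ univ.filter (fun a => hd a = w), x' a
        = ∑ a ∈ univ.filter (fun a => tl a = w), x' a := by
      intro w hw
      have h1 := hcons w hw
      have h2 := hdcons w hw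
      simp only [hx', Finset.sum_add_distrib, ← Finset.mul_sum]
      rw [h1, h2]
    obtain ⟨astar, hastarS, hstar⟩ := Finset.exists_mem_eq_inf' hSne ta
    have hdstar : d astar ≠ 0 := (Finset.mem_filter.1 hastarS).2
    have hstarint : IsInt (x' astar) := by
      show IsInt (x astar + t * d astar)
      by_cases h : 0 < d astar
      · refine ⟨⌈x astar⌉, ?_⟩
        rw [htdef, hstar, hta]
        simp only [if_pos h]
        field_simp
        ring
      · refine ⟨⌊x astar⌋, ?_⟩
        rw [htdef, hstar, hta]
        simp only [if_neg h]
        rw [div_neg, neg_mul, div_mul_cancel₀ _ hdstar]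
        ring
    have hnew : ∀ a, ¬ IsInt (x' a) → a ∈ F.erase astar := by
      intro a ha
      have haF : a ∈ F := by
        by_cases h : a ∈ S
        · exact hSF a h
        · rw [hx'eq a h] at ha; exact (hmemF a).2 ha
      refine Finset.mem_erase.2 ⟨?_, haF⟩
      intro h; rw [h] at ha; exact ha hstarint
    have hcard' : (F.erase astar).card ≤ n := by
      have h1 : F.card ≤ n + 1 := le_trans (Finset.card_le_card (Finset.filter_subset _ _)) hcard
      have h2 : astar ∈ F := hSF astar hastarS
      have := Finset.card_erase_of_mem h2
      omega
    exact IH x' (F.erase astar) hnew hcard' hbd' hcons'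

lemma abstract_integrality (tl hd : A → N) (Cons : Finset N) (L U : A → ℕ)
    (hx : ∃ x : A → ℝ, (∀ a, (L a : ℝ) ≤ x a ∧ x a ≤ (U a : ℝ)) ∧
      ∀ w ∈ Cons, ∑ a ∈ univ.filter (fun a => hd a = w), x a
        = ∑ a ∈ univ.filter (fun a => tl a = w), x a) :
    ∃ y : A → ℕ, (∀ a, L a ≤ y a ∧ y a ≤ U a) ∧
      ∀ w ∈ Cons, ∑ a ∈ univ.filter (fun a => hd a = w), y a
        = ∑ a ∈ univ.filter (fun a => tl a = w), y a := by
  obtain ⟨x, hbd, hcons⟩ := hx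
  exact aux_induction tl hd Cons L U (Fintype.card A) x Finset.univ
    (fun a _ => Finset.mem_univ a) (le_of_eq (Finset.card_univ)) hbd hcons

end Main

section Inst

/-- tail map of the split network -/
def tlV : ((V × V) ⊕ V) → (V ⊕ V) := Sum.elim (fun e => Sum.inr e.1) (fun v => Sum.inl v)

/-- head map of the split network -/
def hdV : ((V × V) ⊕ V) → (V ⊕ V) := Sum.elim (fun e => Sum.inl e.2) (fun v => Sum.inr v)

variable {M : Type*} [AddCommMonoid M]

lemma sum_univ_filter_eq {α : Type*} [Fintype α] [DecidableEq α] (E : Finset α) (f : α → M)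
    (hf : ∀ e ∉ E, f e = 0) (p : α → Prop) [DecidablePred p] :
    ∑ e ∈ univ.filter p, f e = ∑ e ∈ E.filter p, f e := by
  refine (Finset.sum_subset (Finset.filter_subset_filter p (Finset.subset_univ E))
    fun e h1 h2 => ?_).symm
  refine hf e fun hE => h2 (Finset.mem_filter.2 ⟨hE, (Finset.mem_filter.1 h1).2⟩)

lemma sum_hd_inl (z : ((V × V) ⊕ V) → M) (v : V) :
    ∑ a ∈ univ.filter (fun a => hdV a = Sum.inl v), z a
      = ∑ e ∈ univ.filter (fun e : V × V => e.2 = v), z (Sum.inl e) := by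
  rw [Finset.sum_filter, Finset.sum_filter, Fintype.sum_sum_type]
  simp [hdV]

lemma sum_tl_inl (z : ((V × V) ⊕ V) → M) (v : V) :
    ∑ a ∈ univ.filter (fun a => tlV a = Sum.inl v), z a = z (Sum.inr v) := by
  rw [Finset.sum_filter, Fintype.sum_sum_type]
  simp [tlV, Finset.sum_ite_eq' univ v]

lemma sum_hd_inr (z : ((V × V) ⊕ V) → M) (v : V) :
    ∑ a ∈ univ.filter (fun a => hdV a = Sum.inr v), z a = z (Sum.inr v) := by
  rw [Finset.sum_filter, Fintype.sum_sum_type]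
  simp [hdV, Finset.sum_ite_eq' univ v]

lemma sum_tl_inr (z : ((V × V) ⊕ V) → M) (v : V) :
    ∑ a ∈ univ.filter (fun a => tlV a = Sum.inr v), z a
      = ∑ e ∈ univ.filter (fun e : V × V => e.1 = v), z (Sum.inl e) := by
  rw [Finset.sum_filter, Finset.sum_filter, Fintype.sum_sum_type]
  simp [tlV]

end Inst


section Thm

theorem vertex_constrained_integrality' (E : Finset (V × V)) (c : V × V → ℕ)
    (s : V) (T : Finset V) (l u : V → ℕ)
    (hsT : s ∉ T) (hTne : T.Nonempty)
    (hs_no_in : ∀ e ∈ E, e.2 ≠ s) (hT_no_out : ∀ e ∈ E, e.1 ∉ T)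
    (hreal : ∃ f : V × V → ℝ, IsRealFlow E c s T f ∧
      ∀ v : V, (l v : ℝ) ≤ flowThroughR E s f v ∧ flowThroughR E s f v ≤ (u v : ℝ)) :
    ∃ g : V × V → ℕ, IsNatFlow E c s T g ∧
      ∀ v : V, l v ≤ flowThroughN E s g v ∧ flowThroughN E s g v ≤ u v := by
  classical
  obtain ⟨f, ⟨hf0, hfc, hfcons⟩, hfbd⟩ := hreal
  set Cons : Finset (V ⊕ V) :=
    univ.filter (fun n => Sum.elim (fun v => v ≠ s) (fun v => v ∉ T) n) with hCons
  set L : ((V × V) ⊕ V) → ℕ := Sum.elim (fun _ => 0) l with hL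
  set U : ((V × V) ⊕ V) → ℕ :=
    Sum.elim (fun e => if e ∈ E then c e else 0) u with hU
  have habs := abstract_integrality (tlV (V := V)) hdV Cons L U ?_
  · obtain ⟨y, hybd, hycons⟩ := habs
    set g : V × V → ℕ := fun e => y (Sum.inl e) with hg
    have hg0 : ∀ e ∉ E, g e = 0 := by
      intro e he
      have := (hybd (Sum.inl e)).2
      rw [hU] at this
      simp only [Sum.elim_inl, if_neg he] at this
      exact Nat.le_zero.1 this
    -- conservation consequences
    have hA : ∀ v : V, v ≠ s →
        ∑ e ∈ univ.filter (fun e : V × V => e.2 = v), g e = y (Sum.inr v) := by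
      intro v hv
      have hmem : (Sum.inl v : V ⊕ V) ∈ Cons := by
        rw [hCons]; exact Finset.mem_filter.2 ⟨Finset.mem_univ _, hv⟩
      have := hycons (Sum.inl v) hmem
      rw [sum_hd_inl y v, sum_tl_inl y v] at this
      exact this
    have hB : ∀ v : V, v ∉ T →
        y (Sum.inr v) = ∑ e ∈ univ.filter (fun e : V × V => e.1 = v), g e := by
      intro v hv
      have hmem : (Sum.inr v : V ⊕ V) ∈ Cons := by
        rw [hCons]; exact Finset.mem_filter.2 ⟨Finset.mem_univ _, hv⟩
      have := hycons (Sum.inr v) hmem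
      rw [sum_hd_inr y v, sum_tl_inr y v] at this
      exact this
    have hflow : ∀ v : V, flowThroughN E s g v = y (Sum.inr v) := by
      intro v
      by_cases hv : v = s
      · subst hv
        rw [flowThroughN, if_pos rfl, ← sum_univ_filter_eq E g hg0, hB v hsT]
      · rw [flowThroughN, if_neg hv, ← sum_univ_filter_eq E g hg0, hA v hv]
    refine ⟨g, ⟨hg0, ?_, ?_⟩, ?_⟩
    · intro e he
      have := (hybd (Sum.inl e)).2
      rw [hU] at this
      simpa only [Sum.elim_inl, if_pos he] using this
    · intro v hvs hvT
      rw [← sum_univ_filter_eq E g hg0, ← sum_univ_filter_eq E g hg0,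
        hA v hvs, hB v hvT]
    · intro v
      rw [hflow v]
      have := hybd (Sum.inr v)
      rw [hL, hU] at this
      simpa only [Sum.elim_inr] using this
  · -- the real witness
    refine ⟨Sum.elim f (flowThroughR E s f), fun a => ?_, fun w hw => ?_⟩
    · cases a with
      | inl e =>
        simp only [Sum.elim_inl, hL, hU]
        by_cases he : e ∈ E
        · simpa only [if_pos he, Nat.cast_zero] using (hfc e he)
        · simp [if_neg he, hf0 e he]
      | inr v =>
        simpa only [Sum.elim_inr, hL, hU] using hfbd v
    · rw [hCons, Finset.mem_filter] at hw
      cases w with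
      | inl v =>
        have hv : v ≠ s := hw.2
        rw [sum_hd_inl, sum_tl_inl]
        simp only [Sum.elim_inl, Sum.elim_inr]
        rw [flowThroughR, if_neg hv]
        exact sum_univ_filter_eq E f hf0 _
      | inr v =>
        have hv : v ∉ T := hw.2
        rw [sum_hd_inr, sum_tl_inr]
        simp only [Sum.elim_inl, Sum.elim_inr]
        by_cases hvs : v = s
        · subst hvs
          rw [flowThroughR, if_pos rfl]
          exact (sum_univ_filter_eq E f hf0 _).symm
        · rw [flowThroughR, if_neg hvs, hfcons v hvs hv]
          exact (sum_univ_filter_eq E f hf0 _).symm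

end Thm

/-- Integrality of the vertex-constrained flow problem: if a
real-valued flow meets integral lower and upper bounds `[l v, u v]` on the flow
through every vertex, then some integer-valued flow does as well. -/
theorem vertex_constrained_integrality (E : Finset (V × V)) (c : V × V → ℕ)
    (s : V) (T : Finset V) (l u : V → ℕ)
    (hsT : s ∉ T) (hTne : T.Nonempty)
    (hs_no_in : ∀ e ∈ E, e.2 ≠ s) (hT_no_out : ∀ e ∈ E, e.1 ∉ T)
    (hreal : ∃ f : V × V → ℝ, IsRealFlow E c s T f ∧
      ∀ v : V, (l v : ℝ) ≤ flowThroughR E s f v ∧ flowThroughR E s f v ≤ (u v : ℝ)) :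
    ∃ g : V × V → ℕ, IsNatFlow E c s T g ∧
      ∀ v : V, l v ≤ flowThroughN E s g v ∧ flowThroughN E s g v ≤ u v := by
  exact vertex_constrained_integrality' E c s T l u hsT hTne hs_no_in hT_no_out hreal

end Stmt14
end
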